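/- Let M = (E,ρ) be a finite matroid of rank d ≥ 1 and 0 ≤ i ≤ d−1. Let 𝒮ᵢ = {S ⊆ E : ρ(S) ≥ d−i} and ℒᵢ = {0̂} ⊕ 𝒮ᵢ (ordered by inclusion with an adjoined minimum 0̂), with Möbius function μᵢ. If e ∈ E is a loop, then μᵢ(0̂, S) = 0 for every S ∈ 𝒮ᵢ with e ∈ S. -/

import Mathlib

open Finset

/-- A matroid on a finite ground set, presented by its (Whitney) rank function:
normalized, monotone, and submodular. -/
structure FinMatroid (α : Type*) [DecidableEq α] [Fintype α] where
  rk : Finset α → ℕ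
  rk_le_card : ∀ S, rk S ≤ S.card
  rk_mono : ∀ ⦃S T : Finset α⦄, S ⊆ T → rk S ≤ rk T
  rk_submod : ∀ S T : Finset α, rk (S ∪ T) + rk (S ∩ T) ≤ rk S + rk T

namespace FinMatroid

variable {α : Type*} [DecidableEq α] [Fintype α]

/-- The rank `ρ(E)` of the matroid. -/
def rank (M : FinMatroid α) : ℕ := M.rk Finset.univ

lemma rk_empty (M : FinMatroid α) : M.rk ∅ = 0 :=
  Nat.le_zero.mp (by simpa using M.rk_le_card ∅)

lemma rk_le_rank (M : FinMatroid α) (S : Finset α) : M.rk S ≤ M.rank :=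
  M.rk_mono (Finset.subset_univ S)

/-- A loop is an element of rank zero. -/
def IsLoop (M : FinMatroid α) (e : α) : Prop := M.rk {e} = 0

/-- A coloop: deleting it lowers the rank. -/
def IsColoop (M : FinMatroid α) (e : α) : Prop :=
  M.rk (Finset.univ.erase e) + 1 = M.rank

/-- A link is an element which is neither a loop nor a coloop. -/
def IsLink (M : FinMatroid α) (e : α) : Prop := ¬ M.IsLoop e ∧ ¬ M.IsColoop e

/-- The embedding of the ground set with `e` removed. -/
def emb (e : α) : {x : α // x ≠ e} ↪ α := Function.Embedding.subtype _

lemma e_not_mem_map (e : α) (S : Finset {x : α // x ≠ e}) : e ∉ S.map (emb e) := by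
  simp [emb]

/-- Deletion `M ∖ e` of an element. -/
def delete (M : FinMatroid α) (e : α) : FinMatroid {x : α // x ≠ e} where
  rk S := M.rk (S.map (emb e))
  rk_le_card S := by simpa using M.rk_le_card (S.map (emb e))
  rk_mono S T h := M.rk_mono (Finset.map_subset_map.mpr h)
  rk_submod S T := by
    have := M.rk_submod (S.map (emb e)) (T.map (emb e))
    rwa [← Finset.map_union, ← Finset.map_inter] at this

/-- Contraction `M / e` of an element. -/
def contract (M : FinMatroid α) (e : α) : FinMatroid {x : α // x ≠ e} where
  rk S := M.rk (insert e (S.map (emb e))) - M.rk {e}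
  rk_le_card S := by
    try dsimp only
    have h1 : M.rk (insert e (S.map (emb e))) ≤ M.rk (S.map (emb e)) + M.rk {e} := by
      have := M.rk_submod (S.map (emb e)) {e}
      have hie : S.map (emb e) ∩ {e} = ∅ := by
        simp [Finset.eq_empty_iff_forall_notMem, emb]
      rw [Finset.union_comm] at this
      rw [hie, M.rk_empty, ← Finset.insert_eq] at this
      omega
    have h2 := M.rk_le_card (S.map (emb e))
    simp only [Finset.card_map] at h2
    omega
  rk_mono S T h := by
    try dsimp only
    have := M.rk_mono (Finset.insert_subset_insert e ((Finset.map_subset_map (f := emb e)).mpr h))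
    omega
  rk_submod S T := by
    try dsimp only
    have key := M.rk_submod (insert e (S.map (emb e))) (insert e (T.map (emb e)))
    have hU : insert e (S.map (emb e)) ∪ insert e (T.map (emb e))
        = insert e ((S ∪ T).map (emb e)) := by
      rw [Finset.map_union]; ext x
      simp only [Finset.mem_union, Finset.mem_insert]; tauto
    have hI : insert e (S.map (emb e)) ∩ insert e (T.map (emb e))
        = insert e ((S ∩ T).map (emb e)) := by
      rw [Finset.map_inter]; ext x
      simp only [Finset.mem_inter, Finset.mem_insert]; tauto
    rw [hU, hI] at key
    have l1 : M.rk {e} ≤ M.rk (insert e ((S ∪ T).map (emb e))) :=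
      M.rk_mono (by simp)
    have l2 : M.rk {e} ≤ M.rk (insert e ((S ∩ T).map (emb e))) :=
      M.rk_mono (by simp)
    have l3 : M.rk {e} ≤ M.rk (insert e (S.map (emb e))) := M.rk_mono (by simp)
    have l4 : M.rk {e} ≤ M.rk (insert e (T.map (emb e))) := M.rk_mono (by simp)
    omega

/-- The Tutte polynomial
`T_M(x,y) = Σ_{S ⊆ E} (x-1)^{ρ(E)-ρ(S)} (y-1)^{#S-ρ(S)}`, evaluated in a
commutative ring. -/
def tutte (M : FinMatroid α) {R : Type*} [CommRing R] (x y : R) : R :=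
  ∑ S : Finset α, (x - 1) ^ (M.rank - M.rk S) * (y - 1) ^ (S.card - M.rk S)

/-- The specialization `Y_M(q,t) = (1-q)^{ρ(E)} q^{σ(E)} T_M((qt+1-q)/(1-q), 1/q)`. -/
noncomputable def Y (M : FinMatroid α) {K : Type*} [Field K] (q t : K) : K :=
  (1 - q) ^ M.rank * q ^ (Fintype.card α - M.rank) *
    M.tutte ((q * t + 1 - q) / (1 - q)) (1 / q)

open Classical in
/-- The Möbius function `μ(0̂, S)` of the poset obtained from the finsets satisfying `P`
(ordered by inclusion) by adjoining a bottom element `0̂`; by convention `μ(0̂,S) = 0`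
for sets not satisfying `P`. -/
noncomputable def mob (P : Finset α → Prop) : Finset α → ℤ := fun S =>
  if P S then -1 - ∑ T ∈ (S.powerset.erase S).attach, mob P T.1 else 0
termination_by S => S.card
decreasing_by
  have hT := T.2
  simp only [Finset.mem_erase, Finset.mem_powerset] at hT
  exact Finset.card_lt_card (HasSubset.Subset.ssubset_of_ne hT.2 hT.1)

/-- Membership in `𝒮ᵢ^M = {S ⊆ E : ρ(S) ≥ d - i}` (with `i : ℤ`). -/
def Smem (M : FinMatroid α) (i : ℤ) (S : Finset α) : Prop :=
  (M.rank : ℤ) - i ≤ (M.rk S : ℤ)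

/-- The Möbius function `μᵢ^M(S) = μ(0̂, S)` of the lattice `ℒᵢ^M = {0̂} ⊕ 𝒮ᵢ^M`. -/
noncomputable def mu (M : FinMatroid α) (i : ℤ) : Finset α → ℤ := mob (M.Smem i)

/-- `W_i^M(p) = Σ_{S ∈ 𝒮ᵢ^M} μᵢ^M(S) (-p)^{#S-d+1+i}`, evaluated in a commutative
ring.  (Terms with `S ∉ 𝒮ᵢ^M` vanish since `μᵢ^M` is zero there.) -/
noncomputable def W (M : FinMatroid α) (i : ℤ) {R : Type*} [CommRing R] (p : R) : R :=
  ∑ S : Finset α, (M.mu i S : R) * (-p) ^ (((S.card : ℤ) - M.rank + 1 + i).toNat)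

end FinMatroid

open FinMatroid in
lemma mob_sum_powerset {α : Type*} [DecidableEq α] [Fintype α] {P : Finset α → Prop}
    {S : Finset α} (hP : P S) : ∑ T ∈ S.powerset, mob P T = -1 := by
  have hmem : S ∈ S.powerset := Finset.mem_powerset_self S
  rw [← Finset.insert_erase hmem, Finset.sum_insert (Finset.notMem_erase _ _)]
  rw [mob, if_pos hP, Finset.sum_attach]
  ring

open FinMatroid in
lemma rk_erase_of_loop {α : Type*} [DecidableEq α] [Fintype α] (M : FinMatroid α)
    {e : α} (he : M.IsLoop e) {S : Finset α} (heS : e ∈ S) :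
    M.rk (S.erase e) = M.rk S := by
  refine le_antisymm (M.rk_mono (Finset.erase_subset _ _)) ?_
  have h := M.rk_submod (S.erase e) {e}
  have h1 : S.erase e ∪ {e} = S := by
    rw [Finset.union_comm]
    rw [← Finset.insert_eq, Finset.insert_erase heS]
  have h2 : S.erase e ∩ {e} = ∅ := by
    ext x; simp [Finset.mem_erase]
  rw [h1, h2, M.rk_empty, he] at h
  omega

open FinMatroid in
lemma mob_eq_zero_of_loop {α : Type*} [DecidableEq α] [Fintype α] (M : FinMatroid α)
    (i : ℤ) {e : α} (he : M.IsLoop e) :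
    ∀ S : Finset α, e ∈ S → mob (M.Smem i) S = 0 := by
  classical
  intro S
  induction S using Finset.strongInduction with
  | _ S ih =>
  intro heS
  by_cases hP : M.Smem i S
  · have hP' : M.Smem i (S.erase e) := by
      unfold Smem at hP ⊢
      rw [rk_erase_of_loop M he heS]; exact hP
    rw [mob, if_pos hP, Finset.sum_attach]
    have hsplit := Finset.sum_filter_add_sum_filter_not (S.powerset.erase S)
      (fun T => e ∈ T) (mob (M.Smem i))
    have h1 : ∑ T ∈ (S.powerset.erase S).filter (fun T => e ∈ T), mob (M.Smem i) T = 0 := by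
      refine Finset.sum_eq_zero fun T hT => ?_
      simp only [Finset.mem_filter, Finset.mem_erase, Finset.mem_powerset] at hT
      exact ih T (hT.1.2.ssubset_of_ne hT.1.1) hT.2
    have h2 : (S.powerset.erase S).filter (fun T => e ∉ T) = (S.erase e).powerset := by
      ext T
      simp only [Finset.mem_filter, Finset.mem_erase, Finset.mem_powerset,
        Finset.subset_erase]
      constructor
      · rintro ⟨⟨hne, hsub⟩, hnm⟩; exact ⟨hsub, hnm⟩
      · rintro ⟨hsub, hnm⟩
        exact ⟨⟨fun h => hnm (h ▸ heS), hsub⟩, hnm⟩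
    rw [h1, h2, mob_sum_powerset hP'] at hsplit
    rw [← hsplit]
    ring
  · rw [mob, if_neg hP]

/-- if `e` is a loop, then `μᵢ^M(0̂, S) = 0` for every `S ∈ 𝒮ᵢ^M`
containing `e`. -/
theorem mu_eq_zero_of_loop {α : Type*} [DecidableEq α] [Fintype α] (M : FinMatroid α)
    (hd : 1 ≤ M.rank) (i : ℤ) (hi0 : 0 ≤ i) (hi : i ≤ (M.rank : ℤ) - 1)
    (e : α) (he : M.IsLoop e) (S : Finset α) (hS : M.Smem i S) (heS : e ∈ S) :
    M.mu i S = 0 :=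
  mob_eq_zero_of_loop M i he S heS
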